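/- Let L be a real topological vector space and φ : L → ℝ a convex function. Then φ is continuous on L if and only if φ is upper semicontinuous on L. -/

import Mathlib

/-!
If a convex `f` satisfies `f ≤ M` at `x₀ + v` and `x₀ - v`, then convexity on the line through
these points gives `|f (x₀ + t • v) - f x₀| ≤ t * (M - f x₀)` for `t ∈ [0, 1]`. Upper
semicontinuity bounds `f` from above on a neighbourhood of each point; rescaling that neighbourhood
by a small `t` then makes the oscillation of `f` at `x₀` as small as we like.
-/

open Filter Topology Set

lemma Filter.Eventually.nhds_zero_add_and_sub {G : Type*} [AddGroup G] [TopologicalSpace G]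
    [IsTopologicalAddGroup G] {p : G → Prop} {x : G} (h : ∀ᶠ y in 𝓝 x, p y) :
    ∀ᶠ v in 𝓝 0, p (x + v) ∧ p (x - v) :=
  ((continuous_const.add continuous_id).tendsto' 0 x (by simp)).eventually h |>.and
    (((continuous_const.sub continuous_id).tendsto' 0 x (by simp)).eventually h)

section

variable {E : Type*} [AddCommGroup E] [Module ℝ E] {C : Set E} {f : E → ℝ} {x v : E} {t : ℝ}

lemma ConvexOn.add_smul_sub_le (hf : ConvexOn ℝ C f) (hx : x ∈ C) (hxv : x + v ∈ C)
    (ht₀ : 0 ≤ t) (ht₁ : t ≤ 1) : f (x + t • v) - f x ≤ t * (f (x + v) - f x) := by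
  have h := hf.2 hx hxv (sub_nonneg.2 ht₁) ht₀ (sub_add_cancel 1 t)
  rw [show (1 - t) • x + t • (x + v) = x + t • v by module, smul_eq_mul, smul_eq_mul] at h
  linarith

/-- `x` is the convex combination `(x + t • v) / (1 + t) + t • (x - v) / (1 + t)`. -/
lemma ConvexOn.sub_add_smul_le (hf : ConvexOn ℝ C f) (hxtv : x + t • v ∈ C) (hxv : x - v ∈ C)
    (ht₀ : 0 ≤ t) : f x - f (x + t • v) ≤ t * (f (x - v) - f x) := by
  have h1t : 0 < 1 + t := by linarith
  have h := hf.2 hxtv hxv (by positivity : 0 ≤ 1 / (1 + t)) (by positivity : 0 ≤ t / (1 + t))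
    (by field_simp)
  rw [show (1 / (1 + t)) • (x + t • v) + (t / (1 + t)) • (x - v) = x by
    match_scalars <;> field_simp; ring, smul_eq_mul, smul_eq_mul] at h
  rw [div_mul_eq_mul_div, div_mul_eq_mul_div, ← add_div, le_div_iff₀ h1t] at h
  linarith

lemma ConvexOn.abs_add_smul_sub_le {M : ℝ} (hf : ConvexOn ℝ C f) (hx : x ∈ C)
    (hxv : x + v ∈ C) (hxv' : x - v ∈ C) (hM : f (x + v) ≤ M) (hM' : f (x - v) ≤ M)
    (ht₀ : 0 ≤ t) (ht₁ : t ≤ 1) : |f (x + t • v) - f x| ≤ t * (M - f x) := by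
  have hxtv : x + t • v ∈ C := hf.1.add_smul_mem hx hxv ⟨ht₀, ht₁⟩
  have hup := hf.add_smul_sub_le hx hxv ht₀ ht₁
  have hdown := hf.sub_add_smul_le hxtv hxv' ht₀
  rw [abs_le]
  constructor <;> nlinarith

variable [TopologicalSpace E] [IsTopologicalAddGroup E] [ContinuousSMul ℝ E]

lemma ConvexOn.continuousAt_of_isBoundedUnder_le {x₀ : E} (hf : ConvexOn ℝ C f) (hC : C ∈ 𝓝 x₀)
    (hb : IsBoundedUnder (· ≤ ·) (𝓝 x₀) f) : ContinuousAt f x₀ := by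
  obtain ⟨M, hM⟩ := hb
  have hW : ∀ᶠ v in 𝓝 0, (x₀ + v ∈ C ∧ f (x₀ + v) ≤ M) ∧ (x₀ - v ∈ C ∧ f (x₀ - v) ≤ M) :=
    ((show ∀ᶠ y in 𝓝 x₀, y ∈ C from hC).and hM).nhds_zero_add_and_sub
  rw [ContinuousAt, Metric.tendsto_nhds]
  intro ε hε
  obtain ⟨t, ⟨ht₁, htK⟩, ht₀⟩ : ∃ t, (t ≤ 1 ∧ t * (M - f x₀) < ε) ∧ 0 < t := by
    have hK : Tendsto (fun t : ℝ => t * (M - f x₀)) (𝓝 0) (𝓝 0) := by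
      simpa using (tendsto_id.mul_const (M - f x₀) : Tendsto _ (𝓝 (0 : ℝ)) _)
    exact (((eventually_le_nhds one_pos).and (hK.eventually (gt_mem_nhds hε))).filter_mono
      nhdsWithin_le_nhds |>.and self_mem_nhdsWithin).exists (f := 𝓝[>] (0 : ℝ))
  have hscale : Tendsto (fun y => t⁻¹ • (y - x₀)) (𝓝 x₀) (𝓝 0) :=
    ((continuous_id.sub continuous_const).const_smul _).tendsto' x₀ 0 (by simp)
  filter_upwards [hscale.eventually hW] with y ⟨⟨hp, hMp⟩, hm, hMm⟩
  have hy : x₀ + t • t⁻¹ • (y - x₀) = y := by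
    rw [smul_inv_smul₀ ht₀.ne']; abel
  rw [Real.dist_eq, ← hy]
  calc _ ≤ t * (M - f x₀) := hf.abs_add_smul_sub_le (mem_of_mem_nhds hC) hp hm hMp hMm ht₀.le ht₁
    _ < ε := htK

end

theorem convex_continuous_iff_upperSemicontinuous
    {L : Type*} [AddCommGroup L] [Module ℝ L] [TopologicalSpace L]
    [IsTopologicalAddGroup L] [ContinuousSMul ℝ L]
    (φ : L → ℝ) (hφ : ConvexOn ℝ Set.univ φ) :
    Continuous φ ↔ UpperSemicontinuous φ := by
  refine ⟨Continuous.upperSemicontinuous, fun h => continuous_iff_continuousAt.2 fun x => ?_⟩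
  exact hφ.continuousAt_of_isBoundedUnder_le univ_mem
    (isBoundedUnder_of_eventually_le ((h x _ (lt_add_one (φ x))).mono fun _ => le_of_lt))
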